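/- Let A be a type and let α, β, γ, δ be setoids on A forming a pairwise permuting diamond M3 with bottom ⊥. Form the duplication A(γ) over γ. Then the eight setoids ⊥, η₀, α₀ ⊓ α₁, α₀ ⊓ β₁, α₀, β₀, γ₀, δ₀ on A(γ) are pairwise distinct, the set of these eight setoids is closed under ⊓ and ⊔, any two of them permute under relational composition, and they form a copy of M₃,₃: the three setoids α₀ ⊓ α₁, α₀ ⊓ β₁, η₀ have pairwise meets ⊥ and pairwise joins α₀, and the three setoids α₀, β₀, γ₀ have pairwise meets η₀ and pairwise joins δ₀. -/

import Mathlib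

/-! Common setup: the lattice `Setoid A` of equivalence relations on `A`,
the duplication `Dup β = {p : A × A // β p.1 p.2}`, the lifted setoids
`lift0 β θ = θ₀`, `lift1 β θ = θ₁`, the projection kernels `ker0 β = η₀`,
`ker1 β = η₁`, and relational composition `rc`. -/

variable {A : Type*}

/-- The duplication `A(β)`. -/
def Dup (β : Setoid A) : Type _ := {p : A × A // β.r p.1 p.2}

/-- `θ₀`: relate two elements of `A(β)` iff `θ` relates their first coordinates. -/
def lift0 (β θ : Setoid A) : Setoid (Dup β) :=
  ⟨fun x y => θ.r x.1.1 y.1.1,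
   ⟨fun _ => θ.refl' _, fun h => θ.symm' h, fun h h' => θ.trans' h h'⟩⟩

/-- `θ₁`: relate two elements of `A(β)` iff `θ` relates their second coordinates. -/
def lift1 (β θ : Setoid A) : Setoid (Dup β) :=
  ⟨fun x y => θ.r x.1.2 y.1.2,
   ⟨fun _ => θ.refl' _, fun h => θ.symm' h, fun h h' => θ.trans' h h'⟩⟩

/-- `η₀`: kernel of the first projection. -/
def ker0 (β : Setoid A) : Setoid (Dup β) :=
  ⟨fun x y => x.1.1 = y.1.1, ⟨fun _ => rfl, Eq.symm, Eq.trans⟩⟩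

/-- `η₁`: kernel of the second projection. -/
def ker1 (β : Setoid A) : Setoid (Dup β) :=
  ⟨fun x y => x.1.2 = y.1.2, ⟨fun _ => rfl, Eq.symm, Eq.trans⟩⟩

/-- Relational composition. -/
def rc {B : Type*} (r s : B → B → Prop) : B → B → Prop :=
  fun a b => ∃ c, r a c ∧ s c b

/-- `α, β, γ, δ` form a diamond `M₃` with bottom `⊥` in `Setoid A`. -/
def IsM3 (α β γ δ : Setoid A) : Prop :=
  α ⊓ β = ⊥ ∧ α ⊓ γ = ⊥ ∧ β ⊓ γ = ⊥ ∧
  α ⊔ β = δ ∧ α ⊔ γ = δ ∧ β ⊔ γ = δ ∧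
  α ≠ β ∧ α ≠ γ ∧ β ≠ γ ∧
  α ≠ ⊥ ∧ β ≠ ⊥ ∧ γ ≠ ⊥ ∧ α ≠ δ ∧ β ≠ δ ∧ γ ≠ δ

/-- The diamond is pairwise permuting. -/
def M3Permutes (α β γ : Setoid A) : Prop :=
  rc α.r β.r = rc β.r α.r ∧ rc α.r γ.r = rc γ.r α.r ∧
  rc β.r γ.r = rc γ.r β.r


/-! The upper diamond `η₀ < α₀, β₀, γ₀ < δ₀` is the image of the given `M₃` under `θ ↦ θ₀`,
an injective lattice homomorphism `Setoid A → Setoid A(γ)`. The lower diamond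
`⊥ < α₀ ⊓ α₁, α₀ ⊓ β₁, η₀ < α₀` is computed by hand: its meets are `⊥` because `α, β, γ`
meet pairwise in `⊥`, and since `δ = θ ∘ θ'` for any two of `α, β, γ`, the relation `α₀` is
contained in the relational product of any two of its atoms, which therefore permute and
join to `α₀`. In any lattice two diamonds glued along an edge force all remaining meets and
joins of the eight elements. For setoids the remaining incomparable pairs permute too: for an
atom `x` of the lower diamond and `y ∈ {β₀, γ₀}`, `x ∘ y ⊇ x ∘ η₀ ∘ y = α₀ ∘ y = δ₀ ⊇ x ∘ y`. -/

open Function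

section Diamond

variable {L M : Type*} [Lattice L] [Lattice M]

-- With `o ≠ t`, the five elements are automatically pairwise distinct (`IsDiamond.pairwise_ne`).
structure IsDiamond (o a b c t : L) : Prop where
  inf_ab : a ⊓ b = o
  inf_ac : a ⊓ c = o
  inf_bc : b ⊓ c = o
  sup_ab : a ⊔ b = t
  sup_ac : a ⊔ c = t
  sup_bc : b ⊔ c = t
  bot_ne_top : o ≠ t

namespace IsDiamond

variable {o a b c t : L}

theorem swap₁₂ (h : IsDiamond o a b c t) : IsDiamond o b a c t :=
  ⟨inf_comm a b ▸ h.inf_ab, h.inf_bc, h.inf_ac, sup_comm a b ▸ h.sup_ab, h.sup_bc, h.sup_ac,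
    h.bot_ne_top⟩

theorem swap₂₃ (h : IsDiamond o a b c t) : IsDiamond o a c b t :=
  ⟨h.inf_ac, h.inf_ab, inf_comm b c ▸ h.inf_bc, h.sup_ac, h.sup_ab, sup_comm b c ▸ h.sup_bc,
    h.bot_ne_top⟩

theorem bot_le₁ (h : IsDiamond o a b c t) : o ≤ a := h.inf_ab ▸ inf_le_left

theorem bot_le₂ (h : IsDiamond o a b c t) : o ≤ b := h.swap₁₂.bot_le₁

theorem bot_le₃ (h : IsDiamond o a b c t) : o ≤ c := h.swap₂₃.swap₁₂.bot_le₁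

theorem le_top₁ (h : IsDiamond o a b c t) : a ≤ t := h.sup_ab ▸ le_sup_left

theorem le_top₂ (h : IsDiamond o a b c t) : b ≤ t := h.swap₁₂.le_top₁

theorem le_top₃ (h : IsDiamond o a b c t) : c ≤ t := h.swap₂₃.swap₁₂.le_top₁

theorem bot_le_top (h : IsDiamond o a b c t) : o ≤ t := h.bot_le₁.trans h.le_top₁

theorem ne₁₂ (h : IsDiamond o a b c t) : a ≠ b := by
  rintro rfl
  exact h.bot_ne_top (by rw [← h.inf_ab, ← h.sup_ab, inf_idem, sup_idem])

theorem bot_ne (h : IsDiamond o a b c t) : o ≠ a := by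
  rintro rfl
  have hb : b = t := by rw [← h.sup_ab, sup_of_le_right h.bot_le₂]
  have hc : c = t := by rw [← h.sup_ac, sup_of_le_right h.bot_le₃]
  exact h.swap₁₂.swap₂₃.ne₁₂ (hb.trans hc.symm)

theorem ne_top (h : IsDiamond o a b c t) : a ≠ t := by
  rintro rfl
  have hb : b = o := by rw [← h.inf_ab, inf_of_le_right h.le_top₂]
  have hc : c = o := by rw [← h.inf_ac, inf_of_le_right h.le_top₃]
  exact h.swap₁₂.swap₂₃.ne₁₂ (hb.trans hc.symm)

theorem not_le (h : IsDiamond o a b c t) : ¬b ≤ a := fun hba =>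
  h.swap₁₂.bot_ne (by rw [← h.inf_ab, inf_of_le_right hba])

theorem pairwise_ne (h : IsDiamond o a b c t) : [o, a, b, c, t].Pairwise (· ≠ ·) := by
  simp only [List.pairwise_cons, List.mem_cons, List.not_mem_nil, or_false, forall_eq_or_imp,
    forall_eq, false_implies, implies_true, List.Pairwise.nil, and_true]
  exact ⟨⟨h.bot_ne, h.swap₁₂.bot_ne, h.swap₂₃.swap₁₂.bot_ne, h.bot_ne_top⟩,
    ⟨h.ne₁₂, h.swap₂₃.ne₁₂, h.ne_top⟩, ⟨h.swap₁₂.swap₂₃.ne₁₂, h.swap₁₂.ne_top⟩,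
    h.swap₂₃.swap₁₂.ne_top⟩

theorem map (h : IsDiamond o a b c t) (f : LatticeHom L M) (hf : Injective f) :
    IsDiamond (f o) (f a) (f b) (f c) (f t) := by
  obtain ⟨hab, hac, hbc, hab', hac', hbc', hot⟩ := h
  exact ⟨by rw [← map_inf, hab], by rw [← map_inf, hac], by rw [← map_inf, hbc],
    by rw [← map_sup, hab'], by rw [← map_sup, hac'], by rw [← map_sup, hbc'], hf.ne hot⟩

end IsDiamond

theorem inf_eq_of_le_of_inf_eq {o p q x y : L} (hx : x ≤ q) (hqy : q ⊓ y = p)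
    (hxp : x ⊓ p = o) : x ⊓ y = o := by
  rw [← hxp, ← hqy, ← inf_assoc, inf_of_le_left hx]

theorem sup_eq_of_le_of_sup_eq {p q t x y : L} (hy : p ≤ y) (hxp : x ⊔ p = q)
    (hqy : q ⊔ y = t) : x ⊔ y = t := by
  rw [← hqy, ← hxp, sup_assoc, sup_of_le_right hy]

namespace IsDiamond

variable {o p a b q d e t : L} (hL : IsDiamond o a b p q) (hU : IsDiamond p q d e t)
include hL hU

theorem m33_pairwise_ne : [o, p, a, b, q, d, e, t].Pairwise (· ≠ ·) := by
  have hlow : ∀ x ∈ [o, a, b, p, q], x ≤ q := by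
    simp only [List.mem_cons, List.not_mem_nil, or_false, forall_eq_or_imp, forall_eq]
    exact ⟨hL.bot_le_top, hL.le_top₁, hL.le_top₂, hU.bot_le₁, le_rfl⟩
  have hhigh : ∀ y ∈ [d, e, t], ¬y ≤ q := by
    simp only [List.mem_cons, List.not_mem_nil, or_false, forall_eq_or_imp, forall_eq]
    exact ⟨hU.not_le, hU.swap₂₃.not_le, fun htq => hU.ne_top (le_antisymm hU.le_top₁ htq)⟩
  have hsplit : ([o, a, b, p, q] ++ [d, e, t]).Pairwise (· ≠ ·) :=
    List.pairwise_append.2 ⟨hL.pairwise_ne, hU.pairwise_ne.of_cons.of_cons,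
      fun x hx y hy hxy => hhigh y hy (hxy ▸ hlow x hx)⟩
  exact hsplit.perm (List.Perm.cons o (List.perm_middle (l₁ := [a, b]) (l₂ := [q, d, e, t])))
    Ne.symm

-- In `[o, p, a, b, q, d, e, t]` every pair is comparable, the earlier element below the later,
-- except for the ten pairs assumed below.
theorem m33_forall {R : L → L → Prop} (hsymm : ∀ x y, R x y → R y x)
    (hle : ∀ x y, x ≤ y → R x y) (hpa : R p a) (hpb : R p b) (hab : R a b) (had : R a d)
    (hae : R a e) (hbd : R b d) (hbe : R b e) (hqd : R q d) (hqe : R q e) (hde : R d e) :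
    ∀ x ∈ ({o, p, a, b, q, d, e, t} : Set L), ∀ y ∈ ({o, p, a, b, q, d, e, t} : Set L), R x y := by
  have : Std.Symm R := ⟨hsymm⟩
  have hpair : [o, p, a, b, q, d, e, t].Pairwise R := by
    simp only [List.pairwise_cons, List.mem_cons, List.not_mem_nil, or_false, forall_eq_or_imp,
      forall_eq, false_implies, implies_true, List.Pairwise.nil, and_true]
    exact ⟨⟨hle _ _ hL.bot_le₃, hle _ _ hL.bot_le₁, hle _ _ hL.bot_le₂, hle _ _ hL.bot_le_top,
        hle _ _ (hL.bot_le₃.trans hU.bot_le₂), hle _ _ (hL.bot_le₃.trans hU.bot_le₃),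
        hle _ _ (hL.bot_le₃.trans hU.bot_le_top)⟩,
      ⟨hpa, hpb, hle _ _ hU.bot_le₁, hle _ _ hU.bot_le₂, hle _ _ hU.bot_le₃,
        hle _ _ hU.bot_le_top⟩,
      ⟨hab, hle _ _ hL.le_top₁, had, hae, hle _ _ (hL.le_top₁.trans hU.le_top₁)⟩,
      ⟨hle _ _ hL.le_top₂, hbd, hbe, hle _ _ (hL.le_top₂.trans hU.le_top₁)⟩,
      ⟨hqd, hqe, hle _ _ hU.le_top₁⟩, ⟨hde, hle _ _ hU.le_top₂⟩, hle _ _ hU.le_top₃⟩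
  intro x hx y hy
  simp only [Set.mem_insert_iff, Set.mem_singleton_iff] at hx hy
  exact hpair.forall_of_forall (fun z _ => hle z z le_rfl) (by simp [hx]) (by simp [hy])

theorem m33_closed :
    ∀ x ∈ ({o, p, a, b, q, d, e, t} : Set L), ∀ y ∈ ({o, p, a, b, q, d, e, t} : Set L),
      x ⊓ y ∈ ({o, p, a, b, q, d, e, t} : Set L) ∧ x ⊔ y ∈ ({o, p, a, b, q, d, e, t} : Set L) := by
  set S : Set L := {o, p, a, b, q, d, e, t}
  have hS : ∀ {x y u v}, x ⊓ y = u → x ⊔ y = v → u ∈ S → v ∈ S →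
      (x ∈ S → y ∈ S → x ⊓ y ∈ S ∧ x ⊔ y ∈ S) := fun hu hv hu' hv' _ _ => ⟨hu ▸ hu', hv ▸ hv'⟩
  have hLp := hL.swap₂₃.swap₁₂
  intro x hx y hy
  exact hL.m33_forall hU (R := fun x y => x ∈ S → y ∈ S → x ⊓ y ∈ S ∧ x ⊔ y ∈ S)
    (fun x y h hy hx => inf_comm x y ▸ sup_comm x y ▸ h hx hy)
    (fun x y hxy hx hy => ⟨(inf_of_le_left hxy).symm ▸ hx, (sup_of_le_right hxy).symm ▸ hy⟩)
    (hS hLp.inf_ab hLp.sup_ab (by simp [S]) (by simp [S]))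
    (hS hLp.inf_ac hLp.sup_ac (by simp [S]) (by simp [S]))
    (hS hL.inf_ab hL.sup_ab (by simp [S]) (by simp [S]))
    (hS (inf_eq_of_le_of_inf_eq hL.le_top₁ hU.inf_ab hL.inf_ac)
      (sup_eq_of_le_of_sup_eq hU.bot_le₂ hL.sup_ac hU.sup_ab) (by simp [S]) (by simp [S]))
    (hS (inf_eq_of_le_of_inf_eq hL.le_top₁ hU.inf_ac hL.inf_ac)
      (sup_eq_of_le_of_sup_eq hU.bot_le₃ hL.sup_ac hU.sup_ac) (by simp [S]) (by simp [S]))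
    (hS (inf_eq_of_le_of_inf_eq hL.le_top₂ hU.inf_ab hL.inf_bc)
      (sup_eq_of_le_of_sup_eq hU.bot_le₂ hL.sup_bc hU.sup_ab) (by simp [S]) (by simp [S]))
    (hS (inf_eq_of_le_of_inf_eq hL.le_top₂ hU.inf_ac hL.inf_bc)
      (sup_eq_of_le_of_sup_eq hU.bot_le₃ hL.sup_bc hU.sup_ac) (by simp [S]) (by simp [S]))
    (hS hU.inf_ab hU.sup_ab (by simp [S]) (by simp [S]))
    (hS hU.inf_ac hU.sup_ac (by simp [S]) (by simp [S]))
    (hS hU.inf_bc hU.sup_bc (by simp [S]) (by simp [S])) x hx y hy hx hy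

end IsDiamond

end Diamond

section Composition

variable {B : Type*} {r s u : Setoid B}

theorem rc_flip {a b : B} : rc r.r s.r a b → rc s.r r.r b a := fun ⟨c, hac, hcb⟩ =>
  ⟨c, s.symm' hcb, r.symm' hac⟩

theorem rc_le_sup {a b : B} : rc r.r s.r a b → (r ⊔ s).r a b := fun ⟨_, hac, hcb⟩ =>
  (r ⊔ s).trans' (Setoid.le_def.1 le_sup_left hac) (Setoid.le_def.1 le_sup_right hcb)

theorem rc_equivalence (h : rc r.r s.r = rc s.r r.r) : Equivalence (rc r.r s.r) where
  refl a := ⟨a, r.refl' a, s.refl' a⟩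
  symm hab := h ▸ rc_flip hab
  trans {a b c} hab hbc := by
    obtain ⟨x, hax, hxb⟩ := hab
    obtain ⟨y, hby, hyc⟩ := hbc
    obtain ⟨z, hxz, hzy⟩ : rc r.r s.r x y := by rw [h]; exact ⟨b, hxb, hby⟩
    exact ⟨z, r.trans' hax hxz, s.trans' hzy hyc⟩

theorem sup_le_rc (h : rc r.r s.r = rc s.r r.r) {a b : B} : (r ⊔ s).r a b → rc r.r s.r a b :=
  Setoid.le_def.1 (show r ⊔ s ≤ ⟨_, rc_equivalence h⟩ from
    sup_le (Setoid.le_def.2 fun hab => ⟨_, hab, s.refl' _⟩)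
      (Setoid.le_def.2 fun hab => ⟨_, r.refl' _, hab⟩))

theorem rc_le_rc_of_sup_le {r' s' : Setoid B} (h' : rc r'.r s'.r = rc s'.r r'.r)
    (h : r ⊔ s ≤ r' ⊔ s') : rc r.r s.r ≤ rc r'.r s'.r := fun _ _ hab =>
  sup_le_rc h' (Setoid.le_def.1 h (rc_le_sup hab))

theorem rc_comm_of_sup_le_rc (h : ∀ a b, (r ⊔ s).r a b → rc r.r s.r a b) :
    rc r.r s.r = rc s.r r.r := by
  ext a b
  exact ⟨fun hab => rc_flip (h b a ((r ⊔ s).symm' (rc_le_sup hab))),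
    fun hab => h a b ((r ⊔ s).symm' (rc_le_sup (rc_flip hab)))⟩

theorem rc_comm_of_le (h : r ≤ s) : rc r.r s.r = rc s.r r.r :=
  rc_comm_of_sup_le_rc fun a _ hab => ⟨a, r.refl' a, (sup_eq_right.2 h ▸ hab :)⟩

theorem sup_eq_of_le_rc (hr : r ≤ u) (hs : s ≤ u) (hu : ∀ a b, u.r a b → rc r.r s.r a b) :
    r ⊔ s = u :=
  le_antisymm (sup_le hr hs) (Setoid.le_def.2 fun hab => rc_le_sup (hu _ _ hab))

theorem rc_comm_of_le_rc (hr : r ≤ u) (hs : s ≤ u) (hu : ∀ a b, u.r a b → rc r.r s.r a b) :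
    rc r.r s.r = rc s.r r.r :=
  rc_comm_of_sup_le_rc (sup_eq_of_le_rc hr hs hu ▸ hu)

-- `r ∘ s ⊇ r ∘ p ∘ s = q ∘ s = q ⊔ s ⊇ r ⊔ s`.
theorem rc_comm_of_le_of_rc_comm {p q : Setoid B} (hps : p ≤ s) (hrp : rc r.r p.r = rc p.r r.r)
    (hq : r ⊔ p = q) (hqs : rc q.r s.r = rc s.r q.r) : rc r.r s.r = rc s.r r.r := by
  refine rc_comm_of_sup_le_rc fun a b hab => ?_
  have hqs' : (q ⊔ s).r a b := Setoid.le_def.1 (sup_le_sup_right (hq ▸ le_sup_left) s) hab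
  obtain ⟨c, hac, hcb⟩ := sup_le_rc hqs hqs'
  obtain ⟨d, had, hdc⟩ := sup_le_rc hrp (hq ▸ hac)
  exact ⟨d, had, s.trans' (Setoid.le_def.1 hps hdc) hcb⟩

end Composition

section M3

variable {B : Type*} {α β γ δ : Setoid B}

theorem IsM3.isDiamond (h : IsM3 α β γ δ) : IsDiamond ⊥ α β γ δ := by
  obtain ⟨hab, hac, hbc, hab', hac', hbc', -, -, -, ha, -, -, -, -, -⟩ := h
  exact ⟨hab, hac, hbc, hab', hac', hbc', fun hδ => ha (le_bot_iff.1 (hδ ▸ hab' ▸ le_sup_left))⟩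

theorem IsDiamond.isM3 (h : IsDiamond ⊥ α β γ δ) : IsM3 α β γ δ :=
  ⟨h.inf_ab, h.inf_ac, h.inf_bc, h.sup_ab, h.sup_ac, h.sup_bc, h.ne₁₂, h.swap₂₃.ne₁₂,
    h.swap₁₂.swap₂₃.ne₁₂, h.bot_ne.symm, h.swap₁₂.bot_ne.symm, h.swap₂₃.swap₁₂.bot_ne.symm,
    h.ne_top, h.swap₁₂.ne_top, h.swap₂₃.swap₁₂.ne_top⟩

end M3

theorem IsDiamond.m33_rc_comm {B : Type*} {o p a b q d e t : Setoid B}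
    (hL : IsDiamond o a b p q) (hU : IsDiamond p q d e t) (hLp : M3Permutes a b p)
    (hUp : M3Permutes q d e) :
    ∀ x ∈ ({o, p, a, b, q, d, e, t} : Set (Setoid B)),
      ∀ y ∈ ({o, p, a, b, q, d, e, t} : Set (Setoid B)), rc x.r y.r = rc y.r x.r :=
  hL.m33_forall hU (fun _ _ => Eq.symm) (fun _ _ => rc_comm_of_le) hLp.2.1.symm hLp.2.2.symm hLp.1
    (rc_comm_of_le_of_rc_comm hU.bot_le₂ hLp.2.1 hL.sup_ac hUp.1)
    (rc_comm_of_le_of_rc_comm hU.bot_le₃ hLp.2.1 hL.sup_ac hUp.2.1)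
    (rc_comm_of_le_of_rc_comm hU.bot_le₂ hLp.2.2 hL.sup_bc hUp.1)
    (rc_comm_of_le_of_rc_comm hU.bot_le₃ hLp.2.2 hL.sup_bc hUp.2.1) hUp.1 hUp.2.1 hUp.2.2

section Duplication

variable {ε θ θ' : Setoid A}

theorem lift0_mono (h : θ ≤ θ') : lift0 ε θ ≤ lift0 ε θ' :=
  Setoid.le_def.2 fun hxy => Setoid.le_def.1 h hxy

theorem ker0_le_lift0 : ker0 ε ≤ lift0 ε θ :=
  Setoid.le_def.2 fun {x y} (hxy : x.1.1 = y.1.1) => show θ.r x.1.1 y.1.1 by rw [hxy]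

theorem lift0_injective : Injective (lift0 ε) := fun _ _ h =>
  Setoid.ext fun a b => Setoid.ext_iff.1 h ⟨(a, a), ε.refl' a⟩ ⟨(b, b), ε.refl' b⟩

theorem lift0_sup (θ θ' : Setoid A) : lift0 ε (θ ⊔ θ') = lift0 ε θ ⊔ lift0 ε θ' := by
  refine le_antisymm ?_ (sup_le (lift0_mono le_sup_left) (lift0_mono le_sup_right))
  set S := lift0 ε θ ⊔ lift0 ε θ'
  let diag : A → Dup ε := fun a => ⟨(a, a), ε.refl' a⟩
  have hdiag : θ ⊔ θ' ≤ Setoid.comap diag S :=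
    sup_le (Setoid.le_def.2 fun h => Setoid.le_def.1 le_sup_left h)
      (Setoid.le_def.2 fun h => Setoid.le_def.1 le_sup_right h)
  have hx : ∀ x : Dup ε, S.r x (diag x.1.1) := fun x => Setoid.le_def.1 le_sup_left (θ.refl' x.1.1)
  exact Setoid.le_def.2 fun {x y} hxy =>
    S.trans' (hx x) (S.trans' (Setoid.le_def.1 hdiag hxy) (S.symm' (hx y)))

theorem eq_bot_of_lift0_eq_bot (h : lift0 ε θ = ⊥) : θ = ⊥ :=
  eq_bot_iff.2 <| Setoid.le_def.2 fun {a b} hab =>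
    congrArg (fun x : Dup ε => x.1.1)
      (Setoid.le_def.1 h.le (show (lift0 ε θ).r ⟨(a, a), ε.refl' a⟩ ⟨(b, b), ε.refl' b⟩ from hab))

def lift0Hom (ε : Setoid A) : LatticeHom (Setoid A) (Setoid (Dup ε)) where
  toFun := lift0 ε
  map_sup' := lift0_sup
  map_inf' _ _ := rfl

theorem IsDiamond.map_lift0 {α β γ δ : Setoid A} (h : IsDiamond ⊥ α β γ δ) (ε : Setoid A) :
    IsDiamond (ker0 ε) (lift0 ε α) (lift0 ε β) (lift0 ε γ) (lift0 ε δ) :=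
  h.map (lift0Hom ε) lift0_injective

theorem rc_lift0 {x y : Dup ε} :
    rc (lift0 ε θ).r (lift0 ε θ').r x y ↔ rc θ.r θ'.r x.1.1 y.1.1 :=
  ⟨fun ⟨z, hxz, hzy⟩ => ⟨z.1.1, hxz, hzy⟩, fun ⟨c, hxc, hcy⟩ => ⟨⟨(c, c), ε.refl' c⟩, hxc, hcy⟩⟩

theorem lift0_rc_comm (h : rc θ.r θ'.r = rc θ'.r θ.r) :
    rc (lift0 ε θ).r (lift0 ε θ').r = rc (lift0 ε θ').r (lift0 ε θ).r := by
  ext x y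
  rw [rc_lift0, rc_lift0, h]

theorem M3Permutes.map_lift0 {α β γ : Setoid A} (h : M3Permutes α β γ) (ε : Setoid A) :
    M3Permutes (lift0 ε α) (lift0 ε β) (lift0 ε γ) :=
  ⟨lift0_rc_comm h.1, lift0_rc_comm h.2.1, lift0_rc_comm h.2.2⟩

end Duplication

section Lower

variable {α β γ δ θ θ' : Setoid A}

theorem Dup.ext {x y : Dup γ} (h₁ : x.1.1 = y.1.1) (h₂ : x.1.2 = y.1.2) : x = y :=
  Subtype.ext (Prod.ext h₁ h₂)

theorem Dup.rel_snd_of_fst_eq {x y : Dup γ} (h : x.1.1 = y.1.1) : γ.r x.1.2 y.1.2 :=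
  γ.trans' (γ.symm' x.2) (h ▸ y.2)

theorem Dup.rel_fst_of_snd_eq {x y : Dup γ} (h : x.1.2 = y.1.2) : γ.r x.1.1 y.1.1 :=
  γ.trans' x.2 (h ▸ γ.symm' y.2)

theorem eq_of_inf_eq_bot {a b : A} (h : θ ⊓ θ' = ⊥) (h₁ : θ.r a b) (h₂ : θ'.r a b) : a = b :=
  Setoid.le_def.1 h.le ⟨h₁, h₂⟩

theorem lift0_inf_lift1_inf_ker0_eq_bot (h : θ' ⊓ γ = ⊥) : lift0 γ θ ⊓ lift1 γ θ' ⊓ ker0 γ = ⊥ :=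
  eq_bot_iff.2 <| Setoid.le_def.2 fun {_ _} ⟨⟨_, h₂⟩, h₃⟩ =>
    Dup.ext h₃ (eq_of_inf_eq_bot h h₂ (Dup.rel_snd_of_fst_eq h₃))

theorem lift0_inf_lift1_inf_lift0_inf_lift1_eq_bot (hθ : θ ⊓ γ = ⊥) (hαβ : α ⊓ β = ⊥) :
    lift0 γ θ ⊓ lift1 γ α ⊓ (lift0 γ θ ⊓ lift1 γ β) = ⊥ :=
  eq_bot_iff.2 <| Setoid.le_def.2 fun {_ _} ⟨⟨h₁, h₂⟩, _, h₃⟩ =>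
    have hsnd := eq_of_inf_eq_bot hαβ h₂ h₃
    Dup.ext (eq_of_inf_eq_bot hθ h₁ (Dup.rel_fst_of_snd_eq hsnd)) hsnd

theorem lift0_le_rc_ker0 (h : rc γ.r θ.r ≤ rc θ'.r γ.r) {x y : Dup γ} (hxy : (lift0 γ θ).r x y) :
    rc (lift0 γ θ ⊓ lift1 γ θ').r (ker0 γ).r x y := by
  obtain ⟨z, hxz, hzy⟩ := h _ _ ⟨x.1.1, γ.symm' x.2, hxy⟩
  exact ⟨⟨(y.1.1, z), γ.symm' hzy⟩, ⟨hxy, hxz⟩, rfl⟩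

theorem lift0_le_rc_inf (h : IsDiamond ⊥ α β γ δ) (hp : M3Permutes α β γ) {x y : Dup γ}
    (hxy : (lift0 γ α).r x y) : rc (lift0 γ α ⊓ lift1 γ α).r (lift0 γ α ⊓ lift1 γ β).r x y := by
  have hδ₂ : δ.r x.1.2 y.1.2 := δ.trans' (Setoid.le_def.1 h.le_top₃ (γ.symm' x.2))
    (δ.trans' (Setoid.le_def.1 h.le_top₁ hxy) (Setoid.le_def.1 h.le_top₃ y.2))
  obtain ⟨z₂, hxz, hzy⟩ := sup_le_rc hp.1 (h.sup_ab ▸ hδ₂ :)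
  have hδ₁ : δ.r y.1.1 z₂ :=
    δ.trans' (Setoid.le_def.1 h.le_top₃ y.2) (Setoid.le_def.1 h.le_top₂ (β.symm' hzy))
  obtain ⟨z₁, hyz, hz⟩ := sup_le_rc hp.2.1 (h.sup_ac ▸ hδ₁ :)
  exact ⟨⟨(z₁, z₂), hz⟩, ⟨α.trans' hxy hyz, hxz⟩, α.symm' hyz, hzy⟩

theorem IsDiamond.lift0_inf_lift1 (h : IsDiamond ⊥ α β γ δ) (hp : M3Permutes α β γ) :
    IsDiamond ⊥ (lift0 γ α ⊓ lift1 γ α) (lift0 γ α ⊓ lift1 γ β) (ker0 γ) (lift0 γ α) where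
  inf_ab := lift0_inf_lift1_inf_lift0_inf_lift1_eq_bot h.inf_ac h.inf_ab
  inf_ac := lift0_inf_lift1_inf_ker0_eq_bot h.inf_ac
  inf_bc := lift0_inf_lift1_inf_ker0_eq_bot h.inf_bc
  sup_ab := sup_eq_of_le_rc inf_le_left inf_le_left fun _ _ => lift0_le_rc_inf h hp
  sup_ac := sup_eq_of_le_rc inf_le_left ker0_le_lift0 fun _ _ => lift0_le_rc_ker0 hp.2.1.symm.le
  sup_bc := sup_eq_of_le_rc inf_le_left ker0_le_lift0 fun _ _ =>
    lift0_le_rc_ker0 (rc_le_rc_of_sup_le hp.2.2 (by rw [sup_comm, h.sup_ac, h.sup_bc]))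
  bot_ne_top h0 := h.bot_ne (eq_bot_of_lift0_eq_bot h0.symm).symm

theorem M3Permutes.lift0_inf_lift1 (h : IsDiamond ⊥ α β γ δ) (hp : M3Permutes α β γ) :
    M3Permutes (lift0 γ α ⊓ lift1 γ α) (lift0 γ α ⊓ lift1 γ β) (ker0 γ) :=
  ⟨rc_comm_of_le_rc inf_le_left inf_le_left fun _ _ => lift0_le_rc_inf h hp,
    rc_comm_of_le_rc inf_le_left ker0_le_lift0 fun _ _ => lift0_le_rc_ker0 hp.2.1.symm.le,
    rc_comm_of_le_rc inf_le_left ker0_le_lift0 fun _ _ =>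
      lift0_le_rc_ker0 (rc_le_rc_of_sup_le hp.2.2 (by rw [sup_comm, h.sup_ac, h.sup_bc]))⟩

end Lower

/-- Theorem 1.3: `M₃,₃` inside `Setoid (A(γ))`, Figure 6. -/
theorem M33_sublattice (α β γ δ : Setoid A) (h : IsM3 α β γ δ)
    (hperm : M3Permutes α β γ) :
    [(⊥ : Setoid (Dup γ)), ker0 γ, lift0 γ α ⊓ lift1 γ α, lift0 γ α ⊓ lift1 γ β,
      lift0 γ α, lift0 γ β, lift0 γ γ, lift0 γ δ].Pairwise (· ≠ ·) ∧
    (∀ x ∈ ({⊥, ker0 γ, lift0 γ α ⊓ lift1 γ α, lift0 γ α ⊓ lift1 γ β,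
        lift0 γ α, lift0 γ β, lift0 γ γ, lift0 γ δ} : Set (Setoid (Dup γ))),
      ∀ y ∈ ({⊥, ker0 γ, lift0 γ α ⊓ lift1 γ α, lift0 γ α ⊓ lift1 γ β,
        lift0 γ α, lift0 γ β, lift0 γ γ, lift0 γ δ} : Set (Setoid (Dup γ))),
      x ⊓ y ∈ ({⊥, ker0 γ, lift0 γ α ⊓ lift1 γ α, lift0 γ α ⊓ lift1 γ β,
        lift0 γ α, lift0 γ β, lift0 γ γ, lift0 γ δ} : Set (Setoid (Dup γ))) ∧
      x ⊔ y ∈ ({⊥, ker0 γ, lift0 γ α ⊓ lift1 γ α, lift0 γ α ⊓ lift1 γ β,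
        lift0 γ α, lift0 γ β, lift0 γ γ, lift0 γ δ} : Set (Setoid (Dup γ)))) ∧
    (∀ x ∈ ({⊥, ker0 γ, lift0 γ α ⊓ lift1 γ α, lift0 γ α ⊓ lift1 γ β,
        lift0 γ α, lift0 γ β, lift0 γ γ, lift0 γ δ} : Set (Setoid (Dup γ))),
      ∀ y ∈ ({⊥, ker0 γ, lift0 γ α ⊓ lift1 γ α, lift0 γ α ⊓ lift1 γ β,
        lift0 γ α, lift0 γ β, lift0 γ γ, lift0 γ δ} : Set (Setoid (Dup γ))),
      rc x.r y.r = rc y.r x.r) ∧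
    IsM3 (lift0 γ α ⊓ lift1 γ α) (lift0 γ α ⊓ lift1 γ β) (ker0 γ) (lift0 γ α) ∧
    (lift0 γ α ⊓ lift0 γ β = ker0 γ ∧ lift0 γ α ⊓ lift0 γ γ = ker0 γ ∧
      lift0 γ β ⊓ lift0 γ γ = ker0 γ ∧ lift0 γ α ⊔ lift0 γ β = lift0 γ δ ∧
      lift0 γ α ⊔ lift0 γ γ = lift0 γ δ ∧ lift0 γ β ⊔ lift0 γ γ = lift0 γ δ) := by
  have hM := h.isDiamond
  have hL := hM.lift0_inf_lift1 hperm
  have hU := hM.map_lift0 γ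
  exact ⟨hL.m33_pairwise_ne hU, hL.m33_closed hU,
    hL.m33_rc_comm hU (M3Permutes.lift0_inf_lift1 hM hperm) (hperm.map_lift0 γ), hL.isM3,
    hU.inf_ab, hU.inf_ac, hU.inf_bc, hU.sup_ab, hU.sup_ac, hU.sup_bc⟩
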